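/- For the lifting map I(C) = rowspace(I_r | C) sending an r×(n−r) matrix C over GF(q) to an r-dimensional subspace of GF(q)^n, one has d_S(I(C), I(D)) = 2·d_R(C, D) and d_I(I(C), I(D)) = d_R(C,D) for all r×(n−r) matrices C, D. In particular, the lifting map is injective and preserves distance distributions. -/

import Mathlib

/-- The subspace distance `d_S(U,V) = dim(U+V) - dim(U∩V)`. -/
noncomputable def dS {F M : Type} [Field F] [AddCommGroup M] [Module F M]
    (U V : Submodule F M) : ℕ :=
  Module.finrank F ↥(U ⊔ V) - Module.finrank F ↥(U ⊓ V)

/-- The injection distance `d_I(U,V) = max(dim U, dim V) - dim(U∩V)`. -/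
noncomputable def dI {F M : Type} [Field F] [AddCommGroup M] [Module F M]
    (U V : Submodule F M) : ℕ :=
  max (Module.finrank F ↥U) (Module.finrank F ↥V) - Module.finrank F ↥(U ⊓ V)

/-- The row space of a matrix: the span of its rows. -/
def rowSpace {F ι κ : Type} [Field F] (A : Matrix ι κ F) : Submodule F (κ → F) :=
  Submodule.span F (Set.range fun i => A i)

/-- The lifting of an `r × (n-r)` matrix `C`: the row space of `(I_r | C)`,
an `r`-dimensional subspace of `GF(q)^n` (with `GF(q)^n` realized as
`Fin r ⊕ Fin (n-r) → F`). -/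
def lift {F : Type} [Field F] {r k : ℕ} (C : Matrix (Fin r) (Fin k) F) :
    Submodule F (Fin r ⊕ Fin k → F) :=
  rowSpace (Matrix.fromCols (1 : Matrix (Fin r) (Fin r) F) C)

/-!
Writing `L_C(x) = (x, xC)` for the injective linear map with image `I(C)`, a vector lies in
`I(C) ∩ I(D)` iff it is `L_C(x)` with `x (C - D) = 0`. Hence `dim (I(C) ∩ I(D)) = r - rank (C - D)`
by rank–nullity, and since `dim I(C) = dim I(D) = r` both distances follow from
`dim (U + V) + dim (U ∩ V) = dim U + dim V`. Injectivity is the case `d_I = 0`.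
-/

open Matrix Module LinearMap

theorem Matrix.finrank_ker_vecMulLinear_add_rank {F m n : Type} [Field F] [Fintype m]
    [Fintype n] (A : Matrix m n F) :
    finrank F (ker A.vecMulLinear) + A.rank = Fintype.card m := by
  rw [rank_eq_finrank_span_row, ← range_vecMulLinear, add_comm,
    finrank_range_add_finrank_ker, finrank_fintype_fun_eq_card]

theorem Matrix.rank_eq_zero_iff {F m n : Type} [Field F] [Fintype n] (A : Matrix m n F) :
    A.rank = 0 ↔ A = 0 := by
  classical
  rw [Matrix.rank, Submodule.finrank_eq_zero, range_eq_bot, ← toLin'_apply',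
    LinearEquiv.map_eq_zero_iff]

section LiftMap

variable {F m n : Type} [Field F] [Fintype m] [DecidableEq m]

def liftMap (C : Matrix m n F) : (m → F) →ₗ[F] (m ⊕ n → F) :=
  (fromCols 1 C).vecMulLinear

theorem liftMap_apply (C : Matrix m n F) (x : m → F) :
    liftMap C x = Sum.elim x (x ᵥ* C) := by
  simp [liftMap, vecMul_fromCols]

theorem liftMap_injective (C : Matrix m n F) : Function.Injective (liftMap C) :=
  fun x y h => by simpa [liftMap_apply] using congrArg (· ∘ Sum.inl) h

theorem range_liftMap (C : Matrix m n F) : range (liftMap C) = rowSpace (fromCols 1 C) :=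
  range_vecMulLinear _

theorem range_liftMap_inf_range_liftMap (C D : Matrix m n F) :
    range (liftMap C) ⊓ range (liftMap D) = (ker (C - D).vecMulLinear).map (liftMap C) := by
  ext y
  simp only [Submodule.mem_inf, mem_range, Submodule.mem_map, mem_ker, vecMulLinear_apply,
    vecMul_sub, sub_eq_zero]
  constructor
  · rintro ⟨⟨x, rfl⟩, z, hzx⟩
    obtain ⟨hz, hD⟩ : z = x ∧ z ᵥ* D = x ᵥ* C := by
      simpa [liftMap_apply, Sum.elim_eq_iff] using hzx
    exact ⟨x, hz ▸ hD.symm, rfl⟩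
  · rintro ⟨x, hCD, rfl⟩
    exact ⟨⟨x, rfl⟩, x, by rw [liftMap_apply, liftMap_apply, hCD]⟩

end LiftMap

section Lift

variable {F : Type} [Field F] {r k : ℕ}

theorem lift_eq_range_liftMap (C : Matrix (Fin r) (Fin k) F) : lift C = range (liftMap C) :=
  (range_liftMap C).symm

theorem finrank_lift (C : Matrix (Fin r) (Fin k) F) : finrank F (lift C) = r := by
  rw [lift_eq_range_liftMap, finrank_range_of_inj (liftMap_injective C), finrank_fin_fun]

theorem finrank_lift_inf_lift_add_rank (C D : Matrix (Fin r) (Fin k) F) :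
    finrank F ↥(lift C ⊓ lift D) + (C - D).rank = r := by
  rw [lift_eq_range_liftMap, lift_eq_range_liftMap, range_liftMap_inf_range_liftMap,
    (Submodule.equivMapOfInjective _ (liftMap_injective C) _).finrank_eq.symm,
    finrank_ker_vecMulLinear_add_rank, Fintype.card_fin]

theorem dS_lift (C D : Matrix (Fin r) (Fin k) F) : dS (lift C) (lift D) = 2 * (C - D).rank := by
  have hsup := Submodule.finrank_sup_add_finrank_inf_eq (lift C) (lift D)
  have hinf := finrank_lift_inf_lift_add_rank C D
  rw [finrank_lift, finrank_lift] at hsup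
  rw [dS]
  omega

theorem dI_lift (C D : Matrix (Fin r) (Fin k) F) : dI (lift C) (lift D) = (C - D).rank := by
  have hinf := finrank_lift_inf_lift_add_rank C D
  rw [dI, finrank_lift, finrank_lift, max_self]
  omega

theorem lift_injective : Function.Injective (lift (F := F) (r := r) (k := k)) := fun C D h => by
  have hrank := dI_lift C D
  rw [h, dI, inf_idem, max_self, Nat.sub_self, eq_comm, Matrix.rank_eq_zero_iff] at hrank
  exact sub_eq_zero.mp hrank

end Lift

theorem stmt10_general (F : Type) [Field F] (r k : ℕ) :
    (∀ C D : Matrix (Fin r) (Fin k) F,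
      dS (lift C) (lift D) = 2 * (C - D).rank ∧ dI (lift C) (lift D) = (C - D).rank) ∧
    Function.Injective (lift (F := F) (r := r) (k := k)) :=
  ⟨fun C D => ⟨dS_lift C D, dI_lift C D⟩, lift_injective⟩

theorem stmt10 (F : Type) [Field F] [Fintype F] (r k : ℕ) :
    (∀ C D : Matrix (Fin r) (Fin k) F,
      dS (lift C) (lift D) = 2 * (C - D).rank ∧ dI (lift C) (lift D) = (C - D).rank) ∧
    Function.Injective (lift (F := F) (r := r) (k := k)) :=
  stmt10_general F r k
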